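/- Let k be a field and H a finite-dimensional Hopf algebra over k whose antipode S is bijective. Let t ∈ H be a right integral (t·h = ε(h)·t for all h ∈ H), and let α : H → k be a left integral of the dual (∑ h₁·α(h₂) = α(h)·1_H for all h ∈ H) with α(t) = 1. Then for every k-linear endomorphism F of H, the trace of F equals ∑ α(t₂ · F(S(t₁))); more precisely, trace(F) is obtained by applying to Δ(t) the linear map H ⊗ H → k induced by the bilinear map (a, b) ↦ α(b · F(S(a))). -/

import Mathlib

/-!
Write `Δ t = ∑ t₁ ⊗ t₂`. Because `t` is a right integral, `Δ t · (1 ⊗ S h) = Δ t · (h ⊗ 1)`;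
applying `x ⊗ y ↦ α(y) S(x)` and using `∑ α(t₂) t₁ = α(t) 1 = 1` gives
`∑ α(t₂ · S h) S(t₁) = S h`. As `S` is surjective, the functionals `α(t₂ · -)` and the vectors
`S(t₁)` therefore form a dual frame of `H`, so the trace of `F` is `∑ α(t₂ · F(S t₁))`.
-/

open TensorProduct HopfAlgebra Coalgebra

namespace LinearMap

variable {R M : Type*} [CommRing R] [AddCommGroup M] [Module R M] [Module.Free R M]
  [Module.Finite R M]

theorem trace_eq_sum_of_sum_smul_eq_self {ι : Type*} (s : Finset ι) (f : ι → M →ₗ[R] R)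
    (v : ι → M) (hfv : ∀ m, ∑ i ∈ s, f i m • v i = m) (F : M →ₗ[R] M) :
    trace R M F = ∑ i ∈ s, f i (F (v i)) := by
  have hF : F = ∑ i ∈ s, (f i).smulRight (F (v i)) := by
    ext m
    conv_lhs => rw [← hfv m]
    simp
  calc trace R M F = trace R M (∑ i ∈ s, (f i).smulRight (F (v i))) := congrArg _ hF
    _ = ∑ i ∈ s, f i (F (v i)) := by simp

end LinearMap

namespace HopfAlgebra

variable {R A : Type*} [CommSemiring R] [Semiring A] [HopfAlgebra R A]

theorem sum_comul_mul_one_tmul_antipode {a : A} {ι : Type*} (r : Repr R a ι) :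
    ∑ i ∈ r.index, comul (r.left i) * (1 ⊗ₜ[R] antipode R (r.right i)) = a ⊗ₜ[R] 1 := by
  have hcoassoc := congrArg
    (LinearMap.lTensor A (LinearMap.mul' R A ∘ₗ LinearMap.lTensor A (antipode R)))
    (sum_tmul_tmul_eq r (fun i ↦ ℛ R (r.left i)) (fun i ↦ ℛ R (r.right i)))
  simp only [map_sum, LinearMap.lTensor_tmul, LinearMap.comp_apply, LinearMap.mul'_apply,
    ← tmul_sum, sum_mul_antipode_eq_algebraMap_counit] at hcoassoc
  have hcounit := congrArg (LinearMap.lTensor A (Algebra.linearMap R A)) (sum_tmul_counit_eq r)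
  simp only [map_sum, LinearMap.lTensor_tmul, Algebra.linearMap_apply, map_one] at hcounit
  rw [← hcounit, ← hcoassoc]
  refine Finset.sum_congr rfl fun i _ ↦ ?_
  rw [← (ℛ R (r.left i)).eq, Finset.sum_mul]
  simp only [Algebra.TensorProduct.tmul_mul_tmul, mul_one]

theorem comul_mul_one_tmul_antipode_of_right_integral {t : A}
    (ht : ∀ h : A, t * h = counit (R := R) h • t) (h : A) :
    comul t * (1 ⊗ₜ[R] antipode R h) = comul (R := R) t * (h ⊗ₜ[R] 1) := by
  let r := ℛ R h
  calc comul t * (1 ⊗ₜ[R] antipode R h)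
      = comul t * (1 ⊗ₜ[R] antipode R
          (∑ i ∈ r.index, counit (R := R) (r.left i) • r.right i)) := by
        rw [sum_counit_smul]
    _ = ∑ i ∈ r.index, comul (t * r.left i) * (1 ⊗ₜ[R] antipode R (r.right i)) := by
        simp only [map_sum, map_smul, tmul_sum, tmul_smul, Finset.mul_sum, mul_smul_comm, ht,
          smul_mul_assoc]
    _ = comul (R := R) t * (h ⊗ₜ[R] 1) := by
        simp only [Bialgebra.comul_mul, mul_assoc, ← Finset.mul_sum,
          sum_comul_mul_one_tmul_antipode]

theorem sum_smul_antipode_eq_self_of_right_integral {t : A}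
    (ht : ∀ h : A, t * h = counit (R := R) h • t) (α : A →ₗ[R] R)
    (hα : TensorProduct.rid R A (LinearMap.lTensor A α (comul t)) = 1)
    (hS : Function.Surjective (antipode R (A := A))) {ι : Type*} (r : Repr R t ι) (h : A) :
    ∑ i ∈ r.index, α (r.right i * h) • antipode R (r.left i) = h := by
  obtain ⟨g, rfl⟩ := hS h
  have hαr : ∑ i ∈ r.index, α (r.right i) • r.left i = 1 := by
    simpa [← r.eq, map_sum] using hα
  have key := congrArg ((TensorProduct.rid R A).toLinearMap ∘ₗ TensorProduct.map (antipode R) α)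
    (comul_mul_one_tmul_antipode_of_right_integral ht g)
  simp only [← r.eq, Finset.sum_mul, Algebra.TensorProduct.tmul_mul_tmul, mul_one, map_sum,
    LinearMap.comp_apply, map_tmul, LinearEquiv.coe_coe, rid_tmul] at key
  rw [key]
  calc ∑ i ∈ r.index, α (r.right i) • antipode R (r.left i * g)
      = antipode R g * antipode R (∑ i ∈ r.index, α (r.right i) • r.left i) := by
        simp only [antipode_mul_antidistrib, map_sum, map_smul, Finset.mul_sum, mul_smul_comm]
    _ = antipode R g := by rw [hαr, antipode_one, mul_one]

end HopfAlgebra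

/-- **Trace formula via integrals: `tr(F) = ∑ α(t₂ · F(S(t₁)))`.** Let `H` be a
finite-dimensional Hopf algebra over a field `k` with bijective antipode `S`, `t ∈ H` a
right integral (`t * h = ε(h) • t`), and `α : H → k` a left integral of the dual
(`∑ h₁ · α(h₂) = α(h) • 1`) with `α t = 1`.  Then for every `k`-linear endomorphism `F`
of `H`, the trace of `F` is obtained by applying to `Δ t` the linear map `H ⊗ H → k`
induced by the bilinear map `(a, b) ↦ α (b * F (S a))`. -/
theorem stmt12 {k H : Type*} [Field k] [Ring H] [HopfAlgebra k H]
    [FiniteDimensional k H]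
    (hS : Function.Bijective (antipode (R := k) (A := H)))
    (t : H) (ht : ∀ h : H, t * h = counit (R := k) h • t)
    (α : H →ₗ[k] k)
    (hα : ∀ h : H,
      TensorProduct.rid k H ((LinearMap.lTensor H α) (comul (R := k) h)) = α h • (1 : H))
    (hαt : α t = 1) :
    ∀ F : H →ₗ[k] H,
      LinearMap.trace k H F =
        α ((LinearMap.mul' k H) ((TensorProduct.comm k H H)
          ((TensorProduct.map (F ∘ₗ antipode (R := k)) LinearMap.id)
            (comul (R := k) t)))) := by
  intro F
  let r := ℛ k t
  rw [LinearMap.trace_eq_sum_of_sum_smul_eq_self r.index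
    (fun i ↦ α ∘ₗ LinearMap.mulLeft k (r.right i)) (fun i ↦ antipode k (r.left i))
    (sum_smul_antipode_eq_self_of_right_integral ht α (by rw [hα, hαt, one_smul]) hS.2 r),
    ← r.eq]
  simp [map_sum]
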